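/- For the entropy production of the stable Gauss-Markov chain (L = I − Σₒ⁻¹ − SᵀS, U = 0, R = Σₒ⁻¹ + SᵀS − I, V = S − Sᵀ), the Hermitian symbol F_λ(θ) = (I − Sᵀe^{iθ})(I − Se^{−iθ}) + 2iλ(S − Sᵀ) sin θ satisfies F_{−λ−1}(θ) = F_λ(2π − θ) for all λ ∈ ℝ and θ ∈ [0,2π]. Consequently, f_{−λ−1} = f_λ, where f_λ := inf over θ and unit z ∈ ℂ^d of ⟨z, F_λ(θ)z⟩, and whenever f_λ > 0, φ(−λ−1) = φ(λ), where φ(λ) := −(1/4π)∫₀^{2π} ln det F_λ(θ) dθ. -/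

import Mathlib

open Matrix

/-- The Hermitian symbol of the entropy production,
`F_λ(θ) = (I − Sᵀe^{iθ})(I − Se^{−iθ}) + 2iλ(S − Sᵀ) sin θ`. -/
noncomputable def epSymbol {d : ℕ} (S : Matrix (Fin d) (Fin d) ℝ) (lam θ : ℝ) :
    Matrix (Fin d) (Fin d) ℂ :=
  (1 - Complex.exp ((θ : ℂ) * Complex.I) • (S.map (fun x => (x : ℂ)))ᵀ) *
      (1 - Complex.exp (-(θ : ℂ) * Complex.I) • (S.map (fun x => (x : ℂ)))) +
    (2 * Complex.I * (lam : ℂ) * ((Real.sin θ : ℝ) : ℂ)) •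
      ((S.map (fun x => (x : ℂ))) - (S.map (fun x => (x : ℂ)))ᵀ)

/-- `f_λ`: the infimum over `θ ∈ [0,2π]` and unit vectors `z` of
`⟨z, F_λ(θ) z⟩`. -/
noncomputable def epF {d : ℕ} (S : Matrix (Fin d) (Fin d) ℝ) (lam : ℝ) : ℝ :=
  sInf {r : ℝ | ∃ θ ∈ Set.Icc (0 : ℝ) (2 * Real.pi), ∃ z : Fin d → ℂ,
    star z ⬝ᵥ z = 1 ∧ r = (star z ⬝ᵥ (epSymbol S lam θ).mulVec z).re}

/-- `φ(λ) = −(1/4π)∫₀^{2π} ln det F_λ(θ) dθ`. -/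
noncomputable def epPhi {d : ℕ} (S : Matrix (Fin d) (Fin d) ℝ) (lam : ℝ) : ℝ :=
  -(1 / (4 * Real.pi)) *
    ∫ θ in (0 : ℝ)..(2 * Real.pi), Real.log ((epSymbol S lam θ).det.re)

/-!
Replacing `θ` by `-θ` swaps `e^{iθ}` and `e^{-iθ}` in the product part of `F_λ(θ)`, and the two
orderings differ by `(e^{iθ} - e^{-iθ})(S - Sᵀ) = 2i sin θ (S - Sᵀ)`, which is exactly the change
of the skew part when `λ` becomes `-λ - 1`. With `2π`-periodicity this is the reflection
`θ ↦ 2π - θ`, which maps `[0, 2π]` onto itself and preserves the integral over it.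
-/

theorem one_sub_smul_mul_one_sub_smul_sub_swap {R A : Type*} [CommRing R] [Ring A]
    [Algebra R A] (a b : R) (M N : A) :
    (1 - a • N) * (1 - b • M) - (1 - b • N) * (1 - a • M) = (a - b) • (M - N) := by
  simp only [sub_mul, mul_sub, one_mul, mul_one, smul_mul_smul_comm, mul_comm a b]
  module

theorem epSymbol_neg {d : ℕ} (S : Matrix (Fin d) (Fin d) ℝ) (lam θ : ℝ) :
    epSymbol S lam (-θ) = epSymbol S (-lam - 1) θ := by
  have hexp : Complex.exp ((θ : ℂ) * Complex.I) - Complex.exp (-(θ : ℂ) * Complex.I) =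
      2 * Complex.I * (Real.sin θ : ℂ) := by
    rw [Complex.exp_mul_I, Complex.exp_mul_I, Complex.ofReal_sin, Complex.sin_neg,
      Complex.cos_neg]
    ring
  have hswap := one_sub_smul_mul_one_sub_smul_sub_swap (Complex.exp ((θ : ℂ) * Complex.I))
    (Complex.exp (-(θ : ℂ) * Complex.I)) (S.map (fun x => (x : ℂ))) (S.map (fun x => (x : ℂ)))ᵀ
  rw [hexp] at hswap
  simp only [epSymbol, Complex.ofReal_neg, neg_neg, Real.sin_neg]
  rw [sub_eq_iff_eq_add.mp hswap]
  module

theorem epSymbol_add_two_pi {d : ℕ} (S : Matrix (Fin d) (Fin d) ℝ) (lam θ : ℝ) :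
    epSymbol S lam (θ + 2 * Real.pi) = epSymbol S lam θ := by
  simp only [epSymbol, Complex.ofReal_add, Complex.ofReal_mul, Complex.ofReal_ofNat, add_mul,
    neg_add, neg_mul, Complex.exp_add, Complex.exp_neg, Complex.exp_two_pi_mul_I, inv_one, mul_one,
    Real.sin_add_two_pi]

theorem epSymbol_neg_sub_one {d : ℕ} (S : Matrix (Fin d) (Fin d) ℝ) (lam θ : ℝ) :
    epSymbol S (-lam - 1) θ = epSymbol S lam (2 * Real.pi - θ) := by
  rw [sub_eq_neg_add (2 * Real.pi), epSymbol_add_two_pi, epSymbol_neg]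

theorem exists_mem_Icc_add_sub_iff {α : Type*} [AddCommGroup α] [PartialOrder α]
    [IsOrderedAddMonoid α] {a b : α} {p : α → Prop} :
    (∃ x ∈ Set.Icc a b, p (a + b - x)) ↔ ∃ x ∈ Set.Icc a b, p x := by
  have hmem : ∀ x ∈ Set.Icc a b, a + b - x ∈ Set.Icc a b := fun x hx =>
    ⟨by simpa [add_sub_assoc] using hx.2, by simpa [add_sub_right_comm] using hx.1⟩
  refine ⟨fun ⟨x, hx, h⟩ => ⟨_, hmem x hx, h⟩, fun ⟨x, hx, h⟩ => ⟨_, hmem x hx, ?_⟩⟩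
  rwa [sub_sub_cancel]

theorem epF_neg_sub_one {d : ℕ} (S : Matrix (Fin d) (Fin d) ℝ) (lam : ℝ) :
    epF S (-lam - 1) = epF S lam := by
  simp only [epF, epSymbol_neg_sub_one]
  congr 1
  ext r
  simpa using exists_mem_Icc_add_sub_iff (a := 0) (b := 2 * Real.pi)
    (p := fun θ => ∃ z : Fin d → ℂ, star z ⬝ᵥ z = 1 ∧ r = (star z ⬝ᵥ (epSymbol S lam θ) *ᵥ z).re)

theorem epPhi_neg_sub_one {d : ℕ} (S : Matrix (Fin d) (Fin d) ℝ) (lam : ℝ) :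
    epPhi S (-lam - 1) = epPhi S lam := by
  simp only [epPhi, epSymbol_neg_sub_one,
    intervalIntegral.integral_comp_sub_left (fun θ => Real.log (epSymbol S lam θ).det.re)]
  simp

theorem entropy_production_symbol_symmetry_general {d : ℕ}
    (S : Matrix (Fin d) (Fin d) ℝ) :
    (∀ (lam θ : ℝ), epSymbol S (-lam - 1) θ = epSymbol S lam (2 * Real.pi - θ)) ∧
    (∀ lam : ℝ, epF S (-lam - 1) = epF S lam) ∧
    (∀ lam : ℝ, 0 < epF S lam → epPhi S (-lam - 1) = epPhi S lam) :=
  ⟨epSymbol_neg_sub_one S, epF_neg_sub_one S, fun lam _ => epPhi_neg_sub_one S lam⟩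

/-- the Gallavotti–Cohen symmetry of the entropy production
symbol: `F_{−λ−1}(θ) = F_λ(2π−θ)`, hence `f_{−λ−1} = f_λ`, and
`φ(−λ−1) = φ(λ)` whenever `f_λ > 0`. -/
theorem entropy_production_symbol_symmetry {d : ℕ}
    (S : Matrix (Fin d) (Fin d) ℝ) (hρ : spectralRadius ℝ S < 1) :
    (∀ (lam θ : ℝ), epSymbol S (-lam - 1) θ = epSymbol S lam (2 * Real.pi - θ)) ∧
    (∀ lam : ℝ, epF S (-lam - 1) = epF S lam) ∧
    (∀ lam : ℝ, 0 < epF S lam → epPhi S (-lam - 1) = epPhi S lam) :=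
  entropy_production_symbol_symmetry_general S
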